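/- arXiv:2010.09806 — 6 statements merged into one kernel-verified Lean document; each statement's English description precedes it below -/
import Mathlib

section
/- Let ξ be a measurable partition of a standard probability space (X, μ) with finite Shannon entropy H(ξ), and let ρ_ξ be the cut semimetric of ξ (ρ_ξ(x,y) = 0 if x, y lie in the same cell, 1 otherwise). Then for every ε > 0, the ε-entropy satisfies ℍ_ε(X, μ, ρ_ξ) ≤ H(ξ)/ε, where ℍ_ε(X, μ, ρ) = log₂ k for the minimal k such that X = X₀ ∪ X₁ ∪ ... ∪ X_k with μ(X₀) < ε and diam_ρ(X_i) < ε for i ≥ 1. -/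
open MeasureTheory Filter Pointwise

section EpsEntropy

variable {α : Type*} [MeasurableSpace α]

/-- `k` works for an `ε`-cover: `X = X₀ ∪ … ∪ X_k` with `μ X₀ < ε` and `diam_ρ X_i < ε` for `i ≥ 1`. -/
def IsEntCover (μ : Measure α) (ρ : α → α → ℝ) (ε : ℝ) (k : ℕ) : Prop :=
  ∃ A : Fin (k + 1) → Set α, (∀ i, MeasurableSet (A i)) ∧ (⋃ i, A i) = Set.univ ∧
    μ (A 0) < ENNReal.ofReal ε ∧
    ∀ i : Fin (k + 1), i ≠ 0 → ∀ x ∈ A i, ∀ y ∈ A i, ρ x y < ε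

/-- The ε-entropy `ℍ_ε(X, μ, ρ) = log₂ k` for the minimal admissible `k`. -/
noncomputable def epsEntropy (μ : Measure α) (ρ : α → α → ℝ) (ε : ℝ) : ℝ :=
  Real.logb 2 ((sInf {k : ℕ | 0 < k ∧ IsEntCover μ ρ ε k} : ℕ) : ℝ)

/-- A semimetric is admissible iff all of its `ε`-entropies are finite. -/
def Admissible (μ : Measure α) (ρ : α → α → ℝ) : Prop :=
  ∀ ε : ℝ, 0 < ε → ∃ k : ℕ, 0 < k ∧ IsEntCover μ ρ ε k

end EpsEntropy

/-! Let `k = ⌊2 ^ (H / ε)⌋`. At most `k` cells of `ξ` have measure `> 1 / (k + 1)`, and each of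
them has cut-diameter `0`. On the union of the remaining cells the information `-log₂ μ(ξ(x))`
is at least `log₂ (k + 1) > H / ε`, so by Markov's inequality this union has measure `< ε`.
This is an `ε`-cover by `k` sets, whence `ℍ_ε ≤ log₂ k ≤ H / ε`. -/

open Set

section Cover

variable {α : Type*} [MeasurableSpace α] {μ : Measure α} {ρ : α → α → ℝ} {ε : ℝ}

lemma epsEntropy_le_logb_of_isEntCover {k : ℕ} (hk : 0 < k) (hcover : IsEntCover μ ρ ε k) :
    epsEntropy μ ρ ε ≤ Real.logb 2 k := by
  have hmem := Nat.sInf_mem (s := {k : ℕ | 0 < k ∧ IsEntCover μ ρ ε k}) ⟨k, hk, hcover⟩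
  have hle : sInf {k : ℕ | 0 < k ∧ IsEntCover μ ρ ε k} ≤ k := Nat.sInf_le ⟨hk, hcover⟩
  exact Real.logb_le_logb_of_le one_lt_two (by exact_mod_cast hmem.1) (by exact_mod_cast hle)

lemma isEntCover_of_union_eq_univ {k : ℕ} (A₀ : Set α) (A : Fin k → Set α)
    (hA₀ : MeasurableSet A₀) (hA : ∀ i, MeasurableSet (A i)) (hunion : A₀ ∪ ⋃ i, A i = univ)
    (hμ : μ A₀ < ENNReal.ofReal ε) (hdiam : ∀ i, ∀ x ∈ A i, ∀ y ∈ A i, ρ x y < ε) :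
    IsEntCover μ ρ ε k := by
  refine ⟨Fin.cons A₀ A, fun i => Fin.cases hA₀ hA i, by rwa [iUnion_cons], hμ, fun i hi => ?_⟩
  obtain ⟨j, rfl⟩ := Fin.exists_succ_eq.2 hi
  exact hdiam j

end Cover

def cutSemimetric {X β : Type*} [DecidableEq β] (P : X → β) (x y : X) : ℝ :=
  if P x = P y then 0 else 1

lemma isEntCover_cutSemimetric {X β : Type*} [MeasurableSpace X] [MeasurableSpace β]
    [MeasurableSingletonClass β] [DecidableEq β] {μ : Measure X} {P : X → β} (hP : Measurable P)
    {ε : ℝ} (hε : 0 < ε) {k : ℕ} {T : Finset β} (hT : T.card ≤ k)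
    (hμ : μ (P ⁻¹' (↑T)ᶜ) < ENNReal.ofReal ε) : IsEntCover μ (cutSemimetric P) ε k := by
  let e : T ↪ Fin k := T.equivFin.toEmbedding.trans (Fin.castLEEmb hT)
  let cell : Fin k → Set β := fun i => Subtype.val '' (e ⁻¹' {i})
  have hcell : ∀ i, (cell i).Subsingleton := fun i =>
    (subsingleton_singleton.preimage e.injective).image _
  refine isEntCover_of_union_eq_univ (P ⁻¹' (↑T)ᶜ) (fun i => P ⁻¹' cell i)
    (hP T.measurableSet.compl) (fun i => hP (hcell i).finite.measurableSet) ?_ hμ ?_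
  · rw [← preimage_iUnion, ← image_iUnion, ← preimage_iUnion, iUnion_of_singleton, preimage_univ,
      image_univ, Subtype.range_coe, ← preimage_union, compl_union_self, preimage_univ]
  · intro i x hx y hy
    rw [cutSemimetric, if_pos (hcell i hx hy)]
    exact hε

section Cells

variable {X β : Type*} [MeasurableSpace X] {μ : Measure X} {P : X → β}

lemma card_le_of_forall_inv_succ_lt_measureReal [IsProbabilityMeasure μ] [MeasurableSpace β]
    [MeasurableSingletonClass β] (hP : Measurable P) {k : ℕ} {T : Finset β}
    (hT : ∀ b ∈ T, ((k : ℝ) + 1)⁻¹ < μ.real (P ⁻¹' {b})) : T.card ≤ k := by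
  by_contra! hk
  have hne : T.Nonempty := Finset.card_pos.1 (by omega)
  refine lt_irrefl (1 : ℝ) <| calc
    (1 : ℝ) ≤ T.card * ((k : ℝ) + 1)⁻¹ := by
      rw [← div_eq_mul_inv, one_le_div (by positivity)]
      exact_mod_cast hk
    _ = ∑ _b ∈ T, ((k : ℝ) + 1)⁻¹ := by simp
    _ < ∑ b ∈ T, μ.real (P ⁻¹' {b}) := Finset.sum_lt_sum_of_nonempty hne hT
    _ = μ.real (P ⁻¹' T) :=
      sum_measureReal_preimage_singleton T fun b _ => hP (measurableSet_singleton b)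
    _ ≤ 1 := measureReal_le_one

lemma exists_finset_card_le_forall_measureReal_le_inv_succ [IsProbabilityMeasure μ]
    [MeasurableSpace β] [MeasurableSingletonClass β] (hP : Measurable P) (k : ℕ) :
    ∃ T : Finset β, T.card ≤ k ∧ ∀ b ∉ T, μ.real (P ⁻¹' {b}) ≤ ((k : ℝ) + 1)⁻¹ := by
  set S := {b | ((k : ℝ) + 1)⁻¹ < μ.real (P ⁻¹' {b})}
  have hS : S.Finite := not_infinite.1 fun hinf => by
    obtain ⟨T, hTS, hT⟩ := hinf.exists_subset_card_eq (k + 1)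
    have := card_le_of_forall_inv_succ_lt_measureReal (μ := μ) hP fun b hb => hTS hb
    omega
  refine ⟨hS.toFinset, card_le_of_forall_inv_succ_lt_measureReal (μ := μ) hP fun b hb => ?_,
    fun b hb => ?_⟩ <;> simpa [S] using hb

lemma ae_measure_preimage_singleton_ne_zero [Countable β] :
    ∀ᵐ x ∂μ, μ (P ⁻¹' {P x}) ≠ 0 := by
  have hnull : {x | μ (P ⁻¹' {P x}) = 0} = ⋃ b ∈ {b | μ (P ⁻¹' {b}) = 0}, P ⁻¹' {b} := by
    ext x; simp
  rw [ae_iff]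
  simp only [not_not, hnull]
  exact (measure_biUnion_null_iff (to_countable _)).2 fun b hb => hb

/-- The information function `I_ξ` of the partition; its integral is the Shannon entropy `H(ξ)`. -/
noncomputable def cellInfo (μ : Measure X) (P : X → β) (x : X) : ℝ :=
  -Real.logb 2 (μ.real (P ⁻¹' {P x}))

lemma cellInfo_nonneg [IsProbabilityMeasure μ] (x : X) : 0 ≤ cellInfo μ P x :=
  neg_nonneg.2 (Real.logb_nonpos one_lt_two measureReal_nonneg measureReal_le_one)

lemma neg_logb_mul_measureReal_le_integral_cellInfo [IsProbabilityMeasure μ] [Countable β]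
    (hint : Integrable (cellInfo μ P) μ) {s : Set β} {t : ℝ}
    (hs : ∀ b ∈ s, μ.real (P ⁻¹' {b}) ≤ t) :
    -Real.logb 2 t * μ.real (P ⁻¹' s) ≤ ∫ x, cellInfo μ P x ∂μ := by
  set c := -Real.logb 2 t
  rcases le_or_gt c 0 with hc | hc
  · exact (mul_nonpos_of_nonpos_of_nonneg hc measureReal_nonneg).trans
      (integral_nonneg cellInfo_nonneg)
  -- null cells must be discarded: there `cellInfo` is `-logb 2 0 = 0`
  have hsub : P ⁻¹' s ≤ᵐ[μ] {x | c ≤ cellInfo μ P x} := by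
    filter_upwards [ae_measure_preimage_singleton_ne_zero (μ := μ) (P := P)] with x hx hxs
    have hpos : 0 < μ.real (P ⁻¹' {P x}) := ENNReal.toReal_pos hx (measure_ne_top _ _)
    exact neg_le_neg (Real.logb_le_logb_of_le one_lt_two hpos (hs _ hxs))
  calc c * μ.real (P ⁻¹' s) ≤ c * μ.real {x | c ≤ cellInfo μ P x} :=
        mul_le_mul_of_nonneg_left (ENNReal.toReal_mono (measure_ne_top _ _) (measure_mono_ae hsub))
          hc.le
    _ ≤ ∫ x, cellInfo μ P x ∂μ :=
        mul_meas_ge_le_integral_of_nonneg (ae_of_all _ cellInfo_nonneg) hint c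

end Cells

lemma exists_nat_logb_le_lt_logb_succ {r : ℝ} (hr : 0 ≤ r) :
    ∃ k : ℕ, 0 < k ∧ Real.logb 2 k ≤ r ∧ r < Real.logb 2 (k + 1) := by
  have h2r : 0 < (2 : ℝ) ^ r := by positivity
  have hk : 1 ≤ ⌊(2 : ℝ) ^ r⌋₊ := (Nat.one_le_floor_iff _).2 (Real.one_le_rpow one_le_two hr)
  refine ⟨⌊(2 : ℝ) ^ r⌋₊, hk, ?_, ?_⟩
  · calc Real.logb 2 ⌊(2 : ℝ) ^ r⌋₊ ≤ Real.logb 2 ((2 : ℝ) ^ r) :=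
          Real.logb_le_logb_of_le one_lt_two (by exact_mod_cast hk) (Nat.floor_le h2r.le)
      _ = r := Real.logb_rpow two_pos (by norm_num)
  · calc r = Real.logb 2 ((2 : ℝ) ^ r) := (Real.logb_rpow two_pos (by norm_num)).symm
      _ < Real.logb 2 (⌊(2 : ℝ) ^ r⌋₊ + 1) :=
          Real.logb_lt_logb one_lt_two h2r (Nat.lt_floor_add_one _)

/-- The `ε`-entropy of the cut semimetric of a countable partition `ξ` (encoded by a
measurable `P : X → ℕ`) is at most `H(ξ)/ε`, where `H(ξ) = -∫ log₂ μ(ξ(x)) dμ(x)`. -/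
theorem epsEntropy_cut_le_shannon {X : Type*} [MeasurableSpace X]
    (μ : Measure X) [IsProbabilityMeasure μ]
    (P : X → ℕ) (hP : Measurable P)
    (hint : Integrable (fun x => Real.logb 2 (μ (P ⁻¹' {P x})).toReal) μ)
    (H : ℝ) (hH : H = -∫ x, Real.logb 2 (μ (P ⁻¹' {P x})).toReal ∂μ)
    (ρ : X → X → ℝ) (hρ : ρ = fun x y => if P x = P y then (0 : ℝ) else 1)
    (ε : ℝ) (hε : 0 < ε) :
    epsEntropy μ ρ ε ≤ H / ε := by
  have hH' : H = ∫ x, cellInfo μ P x ∂μ := by rw [hH, ← integral_neg]; rfl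
  have hH0 : 0 ≤ H := hH' ▸ integral_nonneg cellInfo_nonneg
  obtain ⟨k, hk, hlogk, hlogk_succ⟩ := exists_nat_logb_le_lt_logb_succ (div_nonneg hH0 hε.le)
  obtain ⟨T, hTk, hsmall⟩ := exists_finset_card_le_forall_measureReal_le_inv_succ (μ := μ) hP k
  have hmarkov := neg_logb_mul_measureReal_le_integral_cellInfo (s := (↑T)ᶜ) hint.neg hsmall
  rw [Real.logb_inv, neg_neg, ← hH'] at hmarkov
  have hrest : μ.real (P ⁻¹' (↑T)ᶜ) < ε := by
    have hc : 0 < Real.logb 2 (k + 1) := (div_nonneg hH0 hε.le).trans_lt hlogk_succ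
    rw [div_lt_iff₀ hε] at hlogk_succ
    exact lt_of_mul_lt_mul_left (by linarith) hc.le
  have hcover : IsEntCover μ ρ ε k := hρ ▸ isEntCover_cutSemimetric hP hε hTk
    ((ENNReal.lt_ofReal_iff_toReal_lt (measure_ne_top _ _)).2 hrest)
  exact (epsEntropy_le_logb_of_isEntCover hk hcover).trans hlogk
end

section
/- Let m, k ∈ ℕ and let ξ₁, ..., ξ_k be finite measurable partitions of a probability space (X, μ), each with at most m cells. Let ξ = ⋁_{i=1}^k ξ_i be their common refinement and ρ = (1/k) Σ_{i=1}^k ρ_{ξ_i} the average of the corresponding cut semimetrics. Then for every ε ∈ (0, 1/2): H(ξ)/k ≤ ℍ_ε(X, μ, ρ)/k + 2ε log m − ε log ε − (1−ε) log(1−ε) + 1/k. -/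
open MeasureTheory Filter Pointwise

/-!
Encode a point by its word `Q x = (P i x)ᵢ ∈ [m]ᵏ`: then `ρ` is the normalised Hamming distance
of words and `H` is the entropy of `Q`. Make a minimal ε-cover `A₀, …, A_n` disjoint and condition
on the cell: `H(Q) ≤ H(cell) + ∑ᵢ μ(Aᵢ) log #Q(Aᵢ)`. The cell entropy is at most `log (n + 1)`,
the exceptional cell `A₀` has mass `< ε` and at most `mᵏ` words, and every other cell has Hamming
diameter `≤ εk`, so its words lie in a Hamming ball of radius `⌊εk⌋`, which has at most
`e^{k h(ε)} m^{εk}` elements.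
-/

open Real Finset

namespace Real

lemma negMulLog_sum_le {ι : Type*} (s : Finset ι) {x : ι → ℝ} (hx : ∀ i ∈ s, 0 ≤ x i) :
    negMulLog (∑ i ∈ s, x i) ≤ ∑ i ∈ s, negMulLog (x i) := by
  rw [negMulLog, neg_mul, sum_mul, ← sum_neg_distrib]
  refine sum_le_sum fun i hi => ?_
  rw [negMulLog, neg_mul, neg_le_neg_iff]
  rcases (hx i hi).eq_or_lt with h0 | h0
  · simp [← h0]
  · exact mul_le_mul_of_nonneg_left (log_le_log h0 (single_le_sum hx hi)) h0.le

lemma sum_negMulLog_le {ι : Type*} (s : Finset ι) {x : ι → ℝ} (hx : ∀ i ∈ s, 0 ≤ x i) :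
    ∑ i ∈ s, negMulLog (x i) ≤ (∑ i ∈ s, x i) * log #s + negMulLog (∑ i ∈ s, x i) := by
  rcases s.eq_empty_or_nonempty with rfl | hs
  · simp
  have hN : (0 : ℝ) < #s := by exact_mod_cast hs.card_pos
  have jensen := concaveOn_negMulLog.le_map_sum (t := s) (w := fun _ => (#s : ℝ)⁻¹) (p := x)
    (fun _ _ => by positivity) (by simp [hN.ne']) hx
  simp only [smul_eq_mul, ← mul_sum, negMulLog_mul] at jensen
  rw [show negMulLog (#s : ℝ)⁻¹ = (#s : ℝ)⁻¹ * log #s by simp [negMulLog, log_inv]] at jensen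
  have := mul_le_mul_of_nonneg_left jensen hN.le
  rw [← mul_assoc, mul_inv_cancel₀ hN.ne', one_mul] at this
  refine this.trans_eq ?_
  field_simp

lemma log_sum_range_choose_le {k s : ℕ} {ε : ℝ} (hε0 : 0 < ε) (hε : ε ≤ 1 / 2)
    (hs : (s : ℝ) ≤ ε * k) :
    log (∑ j ∈ range (s + 1), (k.choose j : ℝ)) ≤ k * binEntropy ε := by
  have hε1 : 0 < 1 - ε := by linarith
  have hsk : s ≤ k := by
    have : (s : ℝ) ≤ k := hs.trans (by nlinarith [(k.cast_nonneg : (0 : ℝ) ≤ k)])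
    exact_mod_cast this
  -- each retained term of `(ε + (1 - ε)) ^ k = 1` is at least `exp (-k h(ε))`
  have term : ∀ j ∈ range (s + 1), exp (-(k * binEntropy ε)) ≤ ε ^ j * (1 - ε) ^ (k - j) := by
    intro j hj
    have hjs : j ≤ s := Nat.lt_succ_iff.mp (mem_range.mp hj)
    have hj : (j : ℝ) ≤ ε * k := le_trans (by exact_mod_cast hjs) hs
    have hlog : log ε ≤ log (1 - ε) := log_le_log hε0 (by linarith)
    rw [← exp_log (by positivity : 0 < ε ^ j * (1 - ε) ^ (k - j)), exp_le_exp,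
      log_mul (by positivity) (by positivity), log_pow, log_pow, Nat.cast_sub (hjs.trans hsk),
      binEntropy, log_inv, log_inv]
    nlinarith [mul_le_mul_of_nonneg_left hlog (sub_nonneg.mpr hj)]
  have hsum : (∑ j ∈ range (s + 1), (k.choose j : ℝ)) * exp (-(k * binEntropy ε)) ≤ 1 :=
    calc (∑ j ∈ range (s + 1), (k.choose j : ℝ)) * exp (-(k * binEntropy ε))
        ≤ ∑ j ∈ range (s + 1), ε ^ j * (1 - ε) ^ (k - j) * k.choose j := by
          rw [sum_mul]
          exact sum_le_sum fun j hj => by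
            rw [mul_comm]; exact mul_le_mul_of_nonneg_right (term j hj) (by positivity)
      _ ≤ ∑ j ∈ range (k + 1), ε ^ j * (1 - ε) ^ (k - j) * k.choose j :=
          sum_le_sum_of_subset_of_nonneg (range_subset_range.mpr (by omega))
            fun _ _ _ => by positivity
      _ = 1 := by rw [← add_pow]; norm_num
  have hpos : 0 < ∑ j ∈ range (s + 1), (k.choose j : ℝ) :=
    sum_pos' (fun j _ => by positivity) ⟨0, by simp⟩
  rw [log_le_iff_le_exp hpos, ← mul_le_mul_iff_left₀ (exp_pos (-(k * binEntropy ε))),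
    ← exp_add, add_neg_cancel, exp_zero]
  exact hsum

end Real

section Hamming

variable {ι β : Type*} [Fintype ι] [DecidableEq ι] [Fintype β]

lemma log_card_le_card_mul_log_card (S : Finset (ι → β)) :
    log #S ≤ Fintype.card ι * log (Fintype.card β) := by
  rcases S.eq_empty_or_nonempty with rfl | hS
  · simp only [card_empty, CharP.cast_eq_zero, log_zero]
    exact mul_nonneg (Nat.cast_nonneg _) (log_natCast_nonneg _)
  rw [← log_pow, ← Nat.cast_pow, ← Fintype.card_fun]
  exact log_le_log (by exact_mod_cast hS.card_pos) (by exact_mod_cast card_le_univ S)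

variable [DecidableEq β] [Nonempty β]

lemma card_filter_hammingDist_le (c₀ : ι → β) (s : ℕ) :
    #{c | hammingDist c₀ c ≤ s} ≤
      (∑ j ∈ range (s + 1), (Fintype.card ι).choose j) * Fintype.card β ^ s := by
  -- a word within distance `s` of `c₀` agrees with `c₀` off a set of at most `s` coordinates
  let agreeOff (S : Finset ι) : Finset (ι → β) :=
    Fintype.piFinset fun j => if j ∈ S then univ else {c₀ j}
  let small : Finset (Finset ι) := {S | #S ≤ s}
  have hball : ({c | hammingDist c₀ c ≤ s} : Finset (ι → β)) ⊆ small.biUnion agreeOff := by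
    intro c hc
    simp only [mem_filter, mem_univ, true_and, hammingDist] at hc
    simp only [small, mem_biUnion, mem_filter, mem_univ, true_and, agreeOff, Fintype.mem_piFinset]
    refine ⟨_, hc, fun j => ?_⟩
    by_cases h : c₀ j = c j <;> simp [h]
  have hagree (S : Finset ι) (hS : #S ≤ s) : #(agreeOff S) ≤ Fintype.card β ^ s := by
    simp only [agreeOff, Fintype.card_piFinset, apply_ite card, card_univ, card_singleton,
      Fintype.prod_ite_mem, prod_const]
    exact Nat.pow_le_pow_right Fintype.card_pos hS
  have hsmall : #small ≤ ∑ j ∈ range (s + 1), (Fintype.card ι).choose j :=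
    calc #small
        ≤ #((range (s + 1)).biUnion fun j => powersetCard j univ) := by
          refine card_le_card fun S hS => ?_
          simp only [small, mem_filter, mem_univ, true_and] at hS
          simpa [mem_biUnion] using Nat.lt_succ_of_le hS
      _ ≤ _ := card_biUnion_le.trans_eq (by simp)
  calc _ ≤ #(small.biUnion agreeOff) := card_le_card hball
    _ ≤ ∑ S ∈ small, #(agreeOff S) := card_biUnion_le
    _ ≤ ∑ S ∈ small, Fintype.card β ^ s := sum_le_sum fun S hS => hagree S (mem_filter.mp hS).2
    _ ≤ _ := by rw [sum_const, smul_eq_mul]; gcongr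

lemma log_card_le_of_hammingDist_le {ε : ℝ} (hε0 : 0 < ε) (hε : ε ≤ 1 / 2) {S : Finset (ι → β)}
    (hS : ∀ c ∈ S, ∀ c' ∈ S, (hammingDist c c' : ℝ) ≤ ε * Fintype.card ι) :
    log #S ≤ Fintype.card ι * (binEntropy ε + ε * log (Fintype.card β)) := by
  have hlogβ : 0 ≤ log (Fintype.card β) := log_natCast_nonneg _
  rcases S.eq_empty_or_nonempty with rfl | ⟨c₀, hc₀⟩
  · have := binEntropy_nonneg hε0.le (by linarith)
    simp only [card_empty, CharP.cast_eq_zero, log_zero]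
    positivity
  set s := ⌊ε * Fintype.card ι⌋₊
  have hs : (s : ℝ) ≤ ε * Fintype.card ι := Nat.floor_le (by positivity)
  have hS_ball : #S ≤ (∑ j ∈ range (s + 1), (Fintype.card ι).choose j) * Fintype.card β ^ s :=
    le_trans (card_le_card fun c hc => mem_filter.mpr ⟨mem_univ _, Nat.le_floor (hS c₀ hc₀ c hc)⟩)
      (card_filter_hammingDist_le c₀ s)
  have hchoose := log_sum_range_choose_le (k := Fintype.card ι) hε0 hε hs
  have hpos : 0 < ∑ j ∈ range (s + 1), ((Fintype.card ι).choose j : ℝ) :=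
    sum_pos' (fun j _ => by positivity) ⟨0, by simp⟩
  calc log #S
      ≤ log ((∑ j ∈ range (s + 1), ((Fintype.card ι).choose j : ℝ)) * Fintype.card β ^ s) :=
        log_le_log (by exact_mod_cast card_pos.mpr ⟨c₀, hc₀⟩) (by exact_mod_cast hS_ball)
    _ = log (∑ j ∈ range (s + 1), ((Fintype.card ι).choose j : ℝ)) + s * log (Fintype.card β) := by
        rw [log_mul hpos.ne' (by positivity), log_pow]
    _ ≤ _ := by nlinarith [mul_le_mul_of_nonneg_right hs hlogβ]

end Hamming

section FiberEntropy

open Set Function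

variable {X C : Type*} [MeasurableSpace X] {μ : Measure X}
  [Fintype C] [MeasurableSpace C] [MeasurableSingletonClass C] {Q : X → C}

lemma neg_integral_logb_measureReal_fiber [IsFiniteMeasure μ] (hQ : Measurable Q) :
    -∫ x, logb 2 (μ.real (Q ⁻¹' {Q x})) ∂μ = (∑ c, negMulLog (μ.real (Q ⁻¹' {c}))) / log 2 := by
  rw [← integral_map (f := fun c => logb 2 (μ.real (Q ⁻¹' {c}))) hQ.aemeasurable
    (measurable_of_finite _).aestronglyMeasurable, integral_fintype .of_finite,
    ← sum_neg_distrib, sum_div]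
  refine sum_congr rfl fun c _ => ?_
  rw [measureReal_def, Measure.map_apply hQ (measurableSet_singleton c), smul_eq_mul, logb,
    negMulLog, ← measureReal_def]
  ring

lemma sum_negMulLog_le_of_partition {ι : Type*} [Fintype ι] [IsFiniteMeasure μ]
    (hQ : Measurable Q) {B : ι → Set X} (hBm : ∀ i, MeasurableSet (B i))
    (hBd : Pairwise (Disjoint on B)) (hBu : ⋃ i, B i = univ) {T : ι → Finset C}
    (hT : ∀ i, ∀ x ∈ B i, Q x ∈ T i) :
    ∑ c, negMulLog (μ.real (Q ⁻¹' {c})) ≤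
      ∑ i, (μ.real (B i) * log #(T i) + negMulLog (μ.real (B i))) := by
  have hQc (c : C) : MeasurableSet (Q ⁻¹' {c}) := hQ (measurableSet_singleton c)
  let a (i : ι) (c : C) : ℝ := μ.real (Q ⁻¹' {c} ∩ B i)
  have hfiber (c : C) : μ.real (Q ⁻¹' {c}) = ∑ i, a i c := by
    rw [← measureReal_iUnion_fintype
      (fun i j hij => (hBd hij).mono inter_subset_right inter_subset_right)
      (fun i => (hQc c).inter (hBm i)), ← inter_iUnion, hBu, inter_univ]
  have hcell (i : ι) : μ.real (B i) = ∑ c ∈ T i, a i c := by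
    simp only [a, ← measureReal_restrict_apply (hQc _)]
    rw [sum_measureReal_preimage_singleton _ fun c _ => hQc c,
      measureReal_restrict_apply (hQ (T i).measurableSet)]
    exact congrArg μ.real (Set.inter_eq_right.mpr (hT i)).symm
  have hzero (i : ι) (c : C) (hc : c ∉ T i) : a i c = 0 := by
    have : Q ⁻¹' {c} ∩ B i = ∅ :=
      eq_empty_of_forall_notMem fun x ⟨hxc, hxB⟩ => hc (hxc ▸ hT i x hxB)
    simp [a, this]
  calc ∑ c, negMulLog (μ.real (Q ⁻¹' {c}))
      ≤ ∑ c, ∑ i, negMulLog (a i c) := sum_le_sum fun c _ =>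
        (hfiber c).symm ▸ negMulLog_sum_le _ fun _ _ => measureReal_nonneg
    _ = ∑ i, ∑ c ∈ T i, negMulLog (a i c) := by
        rw [sum_comm]
        refine sum_congr rfl fun i _ => (sum_subset (subset_univ _) fun c _ hc => ?_).symm
        rw [hzero i c hc, negMulLog_zero]
    _ ≤ _ := sum_le_sum fun i _ =>
        (hcell i).symm ▸ sum_negMulLog_le _ fun _ _ => measureReal_nonneg

lemma sum_negMulLog_le_of_cover [IsProbabilityMeasure μ] {n : ℕ} (hQ : Measurable Q)
    {A : Fin (n + 1) → Set X} (hAm : ∀ i, MeasurableSet (A i)) (hAu : ⋃ i, A i = univ)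
    {T : Fin (n + 1) → Finset C} (hT : ∀ i, ∀ x ∈ A i, Q x ∈ T i) {b₀ b : ℝ}
    (hT₀ : log #(T 0) ≤ b₀) (hb : 0 ≤ b) (hTb : ∀ i ≠ 0, log #(T i) ≤ b) :
    ∑ c, negMulLog (μ.real (Q ⁻¹' {c})) ≤ μ.real (A 0) * b₀ + b + log (n + 1) := by
  set B := disjointed A
  have hBm (i : Fin (n + 1)) : MeasurableSet (B i) :=
    disjointedRec (fun _ j ht => ht.diff (hAm j)) (hAm i)
  have hBu : ⋃ i, B i = univ := iUnion_disjointed.trans hAu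
  have hB₀ : B 0 = A 0 := disjointed_of_isMin A isMin_bot
  set w := fun i => μ.real (B i)
  have hw (i : Fin (n + 1)) : 0 ≤ w i := measureReal_nonneg
  have hw₁ : ∑ i, w i = 1 := by
    rw [← measureReal_iUnion_fintype (disjoint_disjointed A) hBm, hBu, probReal_univ]
  have hlogT : ∑ i, w i * log #(T i) ≤ μ.real (A 0) * b₀ + b := by
    rw [← add_sum_erase _ _ (mem_univ 0), ← hB₀]
    gcongr ?_ + ?_
    · exact mul_le_mul_of_nonneg_left hT₀ (hw 0)
    calc ∑ i ∈ univ.erase 0, w i * log #(T i)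
        ≤ ∑ i ∈ univ.erase 0, w i * b :=
          sum_le_sum fun i hi => mul_le_mul_of_nonneg_left (hTb i (ne_of_mem_erase hi)) (hw i)
      _ ≤ ∑ i, w i * b := sum_le_sum_of_subset_of_nonneg (erase_subset _ _)
          fun i _ _ => mul_nonneg (hw i) hb
      _ = b := by rw [← sum_mul, hw₁, one_mul]
  have hlogn : ∑ i, negMulLog (w i) ≤ log (n + 1) := by
    simpa [hw₁] using sum_negMulLog_le univ fun i _ => hw i
  calc ∑ c, negMulLog (μ.real (Q ⁻¹' {c}))
      ≤ ∑ i, (w i * log #(T i) + negMulLog (w i)) :=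
        sum_negMulLog_le_of_partition hQ hBm (disjoint_disjointed A) hBu
          fun i x hx => hT i x (disjointed_subset A i hx)
    _ ≤ _ := by rw [sum_add_distrib]; linarith

end FiberEntropy

section EpsEntropyBounds

open Set

variable {α : Type*} [MeasurableSpace α] {μ : Measure α} {ρ : α → α → ℝ} {ε : ℝ}

lemma isEntCover_card_of_measurable {C : Type*} [Fintype C] [MeasurableSpace C]
    [MeasurableSingletonClass C] {Q : α → C} (hQ : Measurable Q) (hε : 0 < ε)
    (hρ : ∀ x y, Q x = Q y → ρ x y < ε) : IsEntCover μ ρ ε (Fintype.card C) := by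
  let e := Fintype.equivFin C
  refine ⟨Fin.cases ∅ fun j => Q ⁻¹' {e.symm j}, fun i => ?_,
    iUnion_eq_univ_iff.mpr fun x => ⟨(e (Q x)).succ, by simp⟩, by simpa using hε,
    fun i hi x hx y hy => ?_⟩
  · cases i using Fin.cases <;> simp [hQ (measurableSet_singleton _)]
  · cases i using Fin.cases with
    | zero => exact absurd rfl hi
    | succ j =>
      simp only [Fin.cases_succ, Set.mem_preimage, Set.mem_singleton_iff] at hx hy
      exact hρ x y (hx.trans hy.symm)

lemma exists_isEntCover_epsEntropy_eq (h : ∃ k, 0 < k ∧ IsEntCover μ ρ ε k) :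
    ∃ n, 0 < n ∧ IsEntCover μ ρ ε n ∧ epsEntropy μ ρ ε = logb 2 n :=
  ⟨_, (Nat.sInf_mem h).1, (Nat.sInf_mem h).2, rfl⟩

end EpsEntropyBounds

section CodeEntropy

open Set

variable {X ι β : Type*} [MeasurableSpace X] {μ : Measure X} [IsProbabilityMeasure μ]
  [Fintype ι] [DecidableEq ι] [Fintype β] [DecidableEq β] [Nonempty β]
  [MeasurableSpace β] [MeasurableSingletonClass β]

lemma sum_negMulLog_le_of_isEntCover {Q : X → (ι → β)} (hQ : Measurable Q) {ρ : X → X → ℝ}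
    {ε : ℝ} (hε0 : 0 < ε) (hε : ε ≤ 1 / 2) {n : ℕ} (hcover : IsEntCover μ ρ ε n)
    (hρ : ∀ x y, ρ x y < ε → (hammingDist (Q x) (Q y) : ℝ) ≤ ε * Fintype.card ι) :
    ∑ c, negMulLog (μ.real (Q ⁻¹' {c})) ≤
      log (n + 1) + Fintype.card ι * (2 * ε * log (Fintype.card β) + binEntropy ε) := by
  classical
  obtain ⟨A, hAm, hAu, hA₀, hAρ⟩ := hcover
  let T (i : Fin (n + 1)) : Finset (ι → β) := {c | c ∈ Q '' A i}
  have hT (i : Fin (n + 1)) (hi : i ≠ 0) :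
      log #(T i) ≤ Fintype.card ι * (binEntropy ε + ε * log (Fintype.card β)) := by
    refine log_card_le_of_hammingDist_le hε0 hε fun c hc c' hc' => ?_
    obtain ⟨x, hx, rfl⟩ := (mem_filter.mp hc).2
    obtain ⟨y, hy, rfl⟩ := (mem_filter.mp hc').2
    exact hρ x y (hAρ i hi x hx y hy)
  have hentropy := sum_negMulLog_le_of_cover (μ := μ) hQ hAm hAu (T := T)
    (fun i x hx => mem_filter.mpr ⟨mem_univ _, mem_image_of_mem Q hx⟩)
    (log_card_le_card_mul_log_card (T 0))
    (by have := binEntropy_nonneg hε0.le (by linarith); positivity) hT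
  have hA₀' : μ.real (A 0) * (Fintype.card ι * log (Fintype.card β)) ≤
      ε * (Fintype.card ι * log (Fintype.card β)) :=
    mul_le_mul_of_nonneg_right (ENNReal.toReal_lt_of_lt_ofReal hA₀).le (by positivity)
  linarith

end CodeEntropy

/-- Lemma 1(2): for finite partitions `ξ₁, …, ξ_k`, each with at most `m` cells, with common
refinement `ξ` and average cut semimetric `ρ`, for `ε ∈ (0, 1/2)`:
`H(ξ)/k ≤ ℍ_ε(ρ)/k + 2ε log m − ε log ε − (1−ε) log(1−ε) + 1/k`. -/
theorem shannon_le_epsEntropy_avg {X : Type*} [MeasurableSpace X]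
    (μ : Measure X) [IsProbabilityMeasure μ]
    (m k : ℕ) (hm : 0 < m) (hk : 0 < k)
    (P : Fin k → X → Fin m) (hP : ∀ i, Measurable (P i))
    (ρ : X → X → ℝ)
    (hρ : ρ = fun x y => (k : ℝ)⁻¹ * ∑ i, (if P i x = P i y then (0 : ℝ) else 1))
    (H : ℝ) (hH : H = -∫ x, Real.logb 2 (μ {y | ∀ i, P i y = P i x}).toReal ∂μ)
    (ε : ℝ) (hε0 : 0 < ε) (hε1 : ε < 1 / 2) :
    H / k ≤ epsEntropy μ ρ ε / k + 2 * ε * Real.logb 2 m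
      - ε * Real.logb 2 ε - (1 - ε) * Real.logb 2 (1 - ε) + 1 / k := by
  classical
  have : NeZero m := ⟨hm.ne'⟩
  set Q : X → (Fin k → Fin m) := fun x i => P i x
  have hQ : Measurable Q := measurable_pi_lambda _ hP
  have hρQ (x y : X) : ρ x y = (k : ℝ)⁻¹ * hammingDist (Q x) (Q y) := by
    simp only [hρ, hammingDist, natCast_card_filter, ne_eq, ite_not, Q]
  have hk' : (0 : ℝ) < k := by exact_mod_cast hk
  have hHQ : H = (∑ c, negMulLog (μ.real (Q ⁻¹' {c}))) / log 2 := by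
    have hfib (x : X) : {y | ∀ i, P i y = P i x} = Q ⁻¹' {Q x} := by ext; simp [Q, funext_iff]
    simp only [hH, hfib, ← measureReal_def, neg_integral_logb_measureReal_fiber hQ]
  obtain ⟨n, hn, hcover, hent⟩ := exists_isEntCover_epsEntropy_eq (μ := μ) (ρ := ρ)
    ⟨_, Fintype.card_pos,
      isEntCover_card_of_measurable hQ hε0 fun x y hxy => by simp [hρQ, hxy, hε0]⟩
  have hentropy := sum_negMulLog_le_of_isEntCover hQ hε0 hε1.le hcover fun x y hxy => by
    rw [hρQ, inv_mul_lt_iff₀ hk'] at hxy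
    simpa [mul_comm ε] using hxy.le
  have hlog_succ : log (n + 1) ≤ log n + log 2 := by
    rw [← log_mul (by positivity) two_ne_zero]
    exact log_le_log (by positivity) (by norm_cast; omega)
  have hrhs : epsEntropy μ ρ ε / k + 2 * ε * logb 2 m - ε * logb 2 ε - (1 - ε) * logb 2 (1 - ε)
      + 1 / k = (log n + log 2 + k * (2 * ε * log m + binEntropy ε)) / log 2 / k := by
    rw [hent, binEntropy, log_inv, log_inv]
    simp only [logb]
    field_simp
    ring
  rw [hHQ, hrhs]
  gcongr
  simp only [Fintype.card_fin] at hentropy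
  linarith
end

section
/- Let ρ₁, ..., ρ_k be admissible semimetrics on a probability space (X, μ), each bounded by 1, and let ε ∈ (0,1) be such that ℍ_ε(X, μ, ρ_i) > 0 for all i. Then ℍ_{2√ε}(X, μ, (1/k) Σ_{i=1}^k ρ_i) ≤ 2 Σ_{i=1}^k ℍ_ε(X, μ, ρ_i). -/
open MeasureTheory Filter Pointwise

/-!
Choose for each `ρᵢ` an optimal `ε`-cover, with exceptional set `Bᵢ` of measure `< ε` and
`mᵢ ≥ 2` cells. Intersecting one cell (or the exceptional set) of each `ρᵢ` gives
`∏ (mᵢ + 1) ≤ ∏ mᵢ²` candidate cells. By Markov's inequality the points lying in more than a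
`√ε`-fraction of the `Bᵢ` have measure `≤ √ε`; after discarding them, on each remaining cell the
average of the `ρᵢ` is at most `ε + √ε < 2√ε`, since `ρᵢ < ε` off `Bᵢ` and `ρᵢ ≤ 1` on it.
-/

section EntCover

variable {α : Type*} [MeasurableSpace α] {μ : Measure α} {ρ : α → α → ℝ} {ε : ℝ}

theorem isEntCover_iff {m : ℕ} :
    IsEntCover μ ρ ε m ↔ ∃ A : Fin m → Set α, (∀ j, MeasurableSet (A j)) ∧
      μ (⋃ j, A j)ᶜ < ENNReal.ofReal ε ∧ ∀ j, ∀ x ∈ A j, ∀ y ∈ A j, ρ x y < ε := by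
  constructor
  · rintro ⟨A, hmeas, hcov, hA₀, hdiam⟩
    refine ⟨fun j => A j.succ, fun j => hmeas _, (measure_mono ?_).trans_lt hA₀,
      fun j => hdiam _ j.succ_ne_zero⟩
    intro x hx
    obtain ⟨i, hi⟩ := Set.mem_iUnion.mp (hcov ▸ Set.mem_univ x)
    induction i using Fin.cases with
    | zero => exact hi
    | succ j => exact absurd (Set.mem_iUnion.mpr ⟨j, hi⟩) hx
  · rintro ⟨A, hmeas, hA, hdiam⟩
    refine ⟨Fin.cons (⋃ j, A j)ᶜ A, fun i => ?_, ?_, by simpa using hA, fun i hi => ?_⟩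
    · induction i using Fin.cases with
      | zero => exact (MeasurableSet.iUnion hmeas).compl
      | succ j => exact hmeas j
    · refine Set.eq_univ_of_forall fun x => ?_
      by_cases hx : x ∈ ⋃ j, A j
      · obtain ⟨j, hj⟩ := Set.mem_iUnion.mp hx
        exact Set.mem_iUnion.mpr ⟨j.succ, hj⟩
      · exact Set.mem_iUnion.mpr ⟨0, hx⟩
    · obtain ⟨j, rfl⟩ := Fin.exists_succ_eq.mpr hi
      exact hdiam j

theorem isEntCover_card {ι : Type*} [Fintype ι] (A : ι → Set α) (hmeas : ∀ j, MeasurableSet (A j))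
    (hA : μ (⋃ j, A j)ᶜ < ENNReal.ofReal ε) (hdiam : ∀ j, ∀ x ∈ A j, ∀ y ∈ A j, ρ x y < ε) :
    IsEntCover μ ρ ε (Fintype.card ι) := by
  let e := (Fintype.equivFin ι).symm
  refine isEntCover_iff.mpr ⟨A ∘ e, fun j => hmeas _, ?_, fun j => hdiam _⟩
  rwa [Function.comp_def, e.surjective.iUnion_comp A]

theorem epsEntropy_le_logb {n : ℕ} (hn : 0 < n) (h : IsEntCover μ ρ ε n) :
    epsEntropy μ ρ ε ≤ Real.logb 2 n := by
  have hn' : n ∈ {k : ℕ | 0 < k ∧ IsEntCover μ ρ ε k} := ⟨hn, h⟩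
  exact Real.logb_le_logb_of_le one_lt_two (by exact_mod_cast (Nat.sInf_mem ⟨n, hn'⟩).1)
    (by exact_mod_cast Nat.sInf_le hn')

theorem Admissible.exists_isEntCover (h : Admissible μ ρ) (hε : 0 < ε) :
    ∃ m : ℕ, 0 < m ∧ IsEntCover μ ρ ε m ∧ epsEntropy μ ρ ε = Real.logb 2 m :=
  have hm := Nat.sInf_mem (s := {k : ℕ | 0 < k ∧ IsEntCover μ ρ ε k}) (h ε hε)
  ⟨_, hm.1, hm.2, rfl⟩

end EntCover

theorem measure_lt_sum_indicator_le {α ι : Type*} [MeasurableSpace α] [Fintype ι]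
    {μ : Measure α} {B : ι → Set α} (hB : ∀ i, MeasurableSet (B i)) {ε δ : ℝ} (hδ : 0 < δ)
    (hμB : ∀ i, μ (B i) ≤ ENNReal.ofReal ε) :
    μ {x | δ * Fintype.card ι < ∑ i, (B i).indicator 1 x} ≤ ENNReal.ofReal (ε / δ) := by
  set n := Fintype.card ι
  rcases Nat.eq_zero_or_pos n with hn | hn
  · have : IsEmpty ι := Fintype.card_eq_zero_iff.mp hn
    simp [hn]
  have hc : ENNReal.ofReal (δ * n) ≠ 0 := (ENNReal.ofReal_pos.mpr (by positivity)).ne'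
  calc μ {x | δ * n < ∑ i, (B i).indicator 1 x}
      ≤ μ {x | ENNReal.ofReal (δ * n) ≤ ∑ i, (B i).indicator 1 x} := by
        refine measure_mono fun x (hx : δ * n < _) => ?_
        have hcast : ENNReal.ofReal (∑ i, (B i).indicator 1 x) = ∑ i, (B i).indicator 1 x := by
          rw [ENNReal.ofReal_sum_of_nonneg (f := fun i => (B i).indicator 1 x)
            fun i _ => Set.indicator_nonneg (fun _ _ => zero_le_one) x]
          refine Finset.sum_congr rfl fun i _ => ?_
          by_cases h : x ∈ B i <;> simp [h]
        exact (ENNReal.ofReal_le_ofReal hx.le).trans_eq hcast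
    _ ≤ (∫⁻ x, ∑ i, (B i).indicator 1 x ∂μ) / ENNReal.ofReal (δ * n) :=
        meas_ge_le_lintegral_div
          (Finset.measurable_sum _ fun i _ => measurable_one.indicator (hB i)).aemeasurable hc
          ENNReal.ofReal_ne_top
    _ = (∑ i, μ (B i)) / ENNReal.ofReal (δ * n) := by
        rw [lintegral_finsetSum _ fun i _ => measurable_one.indicator (hB i)]
        simp only [lintegral_indicator_one (hB _)]
    _ ≤ (n * ENNReal.ofReal ε) / ENNReal.ofReal (δ * n) := by
        gcongr
        simpa using Finset.sum_le_sum fun i (_ : i ∈ Finset.univ) => hμB i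
    _ = ENNReal.ofReal (ε / δ) := by
        rw [← ENNReal.ofReal_natCast, ← ENNReal.ofReal_mul (by positivity),
          ← ENNReal.ofReal_div_of_pos (by positivity)]
        congr 1
        field_simp

section Cells

variable {α : Type*}

theorem iUnion_iInter_elim_compl_iUnion_eq_univ {ι : Type*} {κ : ι → Type*}
    (A : ∀ i, κ i → Set α) :
    ⋃ g : ∀ i, Option (κ i), ⋂ i, (g i).elim (⋃ j, A i j)ᶜ (A i) = Set.univ := by
  refine Set.eq_univ_of_forall fun x => ?_
  have : ∀ i, ∃ o : Option (κ i), x ∈ o.elim (⋃ j, A i j)ᶜ (A i) := fun i => by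
    by_cases h : x ∈ ⋃ j, A i j
    · obtain ⟨j, hj⟩ := Set.mem_iUnion.mp h
      exact ⟨some j, hj⟩
    · exact ⟨none, h⟩
  choose g hg using this
  exact Set.mem_iUnion.mpr ⟨g, Set.mem_iInter.mpr hg⟩

theorem le_add_indicator_of_mem_elim {κ : Type*} {A : κ → Set α} {ρ : α → α → ℝ} {ε : ℝ}
    (hdiam : ∀ j, ∀ x ∈ A j, ∀ y ∈ A j, ρ x y < ε) (hbd : ∀ x y, ρ x y ≤ 1) (hε : 0 ≤ ε)
    {o : Option κ} {x y : α} (hx : x ∈ o.elim (⋃ j, A j)ᶜ A) (hy : y ∈ o.elim (⋃ j, A j)ᶜ A) :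
    ρ x y ≤ ε + (⋃ j, A j)ᶜ.indicator 1 x := by
  cases o with
  | none =>
    rw [Set.indicator_of_mem (s := (⋃ j, A j)ᶜ) hx, Pi.one_apply]
    linarith [hbd x y]
  | some j =>
    have : (0 : ℝ) ≤ (⋃ j, A j)ᶜ.indicator 1 x := Set.indicator_nonneg (fun _ _ => zero_le_one) x
    linarith [hdiam j x hx y hy]

end Cells

theorem IsEntCover.avg {α ι : Type*} [MeasurableSpace α] [Fintype ι] {μ : Measure α}
    {ρ : ι → α → α → ℝ} {m : ι → ℕ} {ε δ η : ℝ} (hm : ∀ i, IsEntCover μ (ρ i) ε (m i))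
    (hbd : ∀ i x y, ρ i x y ≤ 1) (hε : 0 ≤ ε) (hδ : 0 < δ) (hdiam : ε + δ < η)
    (hmeas : ε / δ < η) :
    IsEntCover μ (fun x y => (Fintype.card ι : ℝ)⁻¹ * ∑ i, ρ i x y) η (∏ i, (m i + 1)) := by
  classical
  choose A hAmeas hA hAdiam using fun i => isEntCover_iff.mp (hm i)
  set n := Fintype.card ι
  set B : ι → Set α := fun i => (⋃ j, A i j)ᶜ
  have hBmeas : ∀ i, MeasurableSet (B i) := fun i => (MeasurableSet.iUnion (hAmeas i)).compl
  set T := {x | δ * n < ∑ i, (B i).indicator 1 x}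
  have hTmeas : MeasurableSet T := measurableSet_lt measurable_const
    (Finset.measurable_sum _ fun i _ => measurable_one.indicator (hBmeas i))
  have hcell_meas : ∀ i (o : Option (Fin (m i))), MeasurableSet (o.elim (B i) (A i)) := by
    rintro i (_ | j)
    exacts [hBmeas i, hAmeas i j]
  have hcard : Fintype.card ((i : ι) → Option (Fin (m i))) = ∏ i, (m i + 1) := by simp
  rw [← hcard]
  refine isEntCover_card (fun g => (⋂ i, (g i).elim (B i) (A i)) \ T)
    (fun g => (MeasurableSet.iInter fun i => hcell_meas i (g i)).diff hTmeas) ?_ ?_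
  · rw [← Set.iUnion_sdiff, iUnion_iInter_elim_compl_iUnion_eq_univ, ← Set.compl_eq_univ_sdiff,
      compl_compl]
    refine (measure_lt_sum_indicator_le hBmeas hδ fun i => (hA i).le).trans_lt ?_
    exact (ENNReal.ofReal_lt_ofReal_iff (by linarith)).mpr hmeas
  · rintro g x ⟨hx, hxT⟩ y ⟨hy, -⟩
    rw [Set.mem_iInter] at hx hy
    have hsum : ∑ i, ρ i x y ≤ n * (ε + δ) := calc
      ∑ i, ρ i x y ≤ ∑ i, (ε + (B i).indicator 1 x) := Finset.sum_le_sum fun i _ =>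
          le_add_indicator_of_mem_elim (hAdiam i) (hbd i) hε (hx i) (hy i)
      _ = n * ε + ∑ i, (B i).indicator 1 x := by simp [Finset.sum_add_distrib, n]
      _ ≤ n * (ε + δ) := by simp only [T, Set.mem_ofPred_eq, not_lt] at hxT; linarith
    rcases eq_or_ne n 0 with hn | hn
    · simp only [hn, CharP.cast_eq_zero, inv_zero, zero_mul]; linarith
    · calc (n : ℝ)⁻¹ * ∑ i, ρ i x y ≤ (n : ℝ)⁻¹ * (n * (ε + δ)) := by gcongr
        _ = ε + δ := by field_simp
        _ < η := hdiam

theorem logb_prod_add_one_le_two_mul_sum_logb {ι : Type*} [Fintype ι] {m : ι → ℕ}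
    (hm : ∀ i, 2 ≤ m i) :
    Real.logb 2 ((∏ i, (m i + 1) : ℕ) : ℝ) ≤ 2 * ∑ i, Real.logb 2 (m i) := by
  rw [Nat.cast_prod, Real.logb_prod _ _ fun i _ => by positivity, Finset.mul_sum]
  refine Finset.sum_le_sum fun i _ => ?_
  have hsq : m i + 1 ≤ m i ^ 2 := by nlinarith [hm i]
  calc Real.logb 2 ((m i + 1 : ℕ) : ℝ) ≤ Real.logb 2 ((m i : ℝ) ^ 2) :=
        Real.logb_le_logb_of_le one_lt_two (by positivity) (by exact_mod_cast hsq)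
    _ = 2 * Real.logb 2 (m i) := by rw [Real.logb_pow]; norm_num

theorem epsEntropy_avg_le_general {X : Type*} [MeasurableSpace X]
    (μ : Measure X)
    (k : ℕ) (ρ : Fin k → X → X → ℝ)
    (hbd : ∀ i x y, ρ i x y ≤ 1)
    (hadm : ∀ i, Admissible μ (ρ i))
    (ε : ℝ) (hε0 : 0 < ε) (hε1 : ε < 1)
    (hpos : ∀ i, 0 < epsEntropy μ (ρ i) ε) :
    epsEntropy μ (fun x y => (k : ℝ)⁻¹ * ∑ i, ρ i x y) (2 * Real.sqrt ε)
      ≤ 2 * ∑ i, epsEntropy μ (ρ i) ε := by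
  choose m hm_pos hm_cover hm_eq using fun i => (hadm i).exists_isEntCover hε0
  have hm_two : ∀ i, 2 ≤ m i := fun i => by
    have := hpos i
    rw [hm_eq, Real.logb_pos_iff one_lt_two (by exact_mod_cast hm_pos i)] at this
    exact_mod_cast this
  have hε_sqrt : ε < √ε := Real.lt_sqrt_self_iff.mpr ⟨hε0.ne', hε1⟩
  have hcover := IsEntCover.avg hm_cover hbd hε0.le (Real.sqrt_pos.mpr hε0) (η := 2 * √ε)
    (by linarith) (by rw [Real.div_sqrt]; linarith)
  rw [Fintype.card_fin] at hcover
  calc _ ≤ Real.logb 2 ((∏ i, (m i + 1) : ℕ) : ℝ) :=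
        epsEntropy_le_logb (Finset.prod_pos fun i _ => Nat.succ_pos _) hcover
    _ ≤ 2 * ∑ i, Real.logb 2 (m i) := logb_prod_add_one_le_two_mul_sum_logb hm_two
    _ = 2 * ∑ i, epsEntropy μ (ρ i) ε := by simp only [hm_eq]

/-- Lemma 2: for admissible semimetrics `ρ₁, …, ρ_k ≤ 1` and `ε ∈ (0,1)` with
`ℍ_ε(ρᵢ) > 0`, one has `ℍ_{2√ε}((1/k)Σρᵢ) ≤ 2 Σ ℍ_ε(ρᵢ)`. -/
theorem epsEntropy_avg_le {X : Type*} [MeasurableSpace X]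
    (μ : Measure X) [IsProbabilityMeasure μ]
    (k : ℕ) (hk : 0 < k) (ρ : Fin k → X → X → ℝ)
    (hnonneg : ∀ i x y, 0 ≤ ρ i x y)
    (hsymm : ∀ i x y, ρ i x y = ρ i y x)
    (htri : ∀ i x y z, ρ i x z ≤ ρ i x y + ρ i y z)
    (hbd : ∀ i x y, ρ i x y ≤ 1)
    (hadm : ∀ i, Admissible μ (ρ i))
    (ε : ℝ) (hε0 : 0 < ε) (hε1 : ε < 1)
    (hpos : ∀ i, 0 < epsEntropy μ (ρ i) ε) :
    epsEntropy μ (fun x y => (k : ℝ)⁻¹ * ∑ i, ρ i x y) (2 * Real.sqrt ε)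
      ≤ 2 * ∑ i, epsEntropy μ (ρ i) ε :=
  epsEntropy_avg_le_general μ k ρ hbd hadm ε hε0 hε1 hpos
end

section
/- Let H be a subgroup of a countable amenable group G with a fixed system {g_i} of representatives of left cosets of H, and let {W̃_n} be a left Følner sequence in G. Then there exists a Følner sequence {W_n} in G with |W_n △ W̃_n| = o(|W_n|) such that each W_n decomposes as a disjoint union W_n = ⋃_i S_n^i g_i^{-1} with S_n^i ⊂ H, satisfying: for every h ∈ H and ε > 0, the inequality |h S_n^i △ S_n^i| ≤ ε|S_n^i| holds for all sufficiently large n and all i. -/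
/-!
Enumerate `H = {e₀, e₁, …}`. Left multiplication by `eₖ ∈ H` preserves every right coset `H w`,
so the Følner defect `|eₖ W̃ₙ ∆ W̃ₙ|` splits over right cosets. On each coset `C` weigh the local
defects as `∑_{k<n} 2⁻ᵏ |(eₖ W̃ₙ ∆ W̃ₙ) ∩ C|`; summed over all cosets this is at most
`Φₙ |W̃ₙ|` with `Φₙ = ∑ₖ 2⁻ᵏ |eₖ W̃ₙ ∆ W̃ₙ| / |W̃ₙ| → 0` (dominated convergence). Let `Wₙ` keep
the cosets whose weighted defect is at most `sₙ |W̃ₙ ∩ C|` with `sₙ ≈ √Φₙ`. By Markov's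
inequality the discarded cosets carry at most `√Φₙ |W̃ₙ|` points, so `Wₙ` is still Følner and
close to `W̃ₙ`, while on every kept coset `|eₖ S ∆ S| ≤ 2ᵏ sₙ |S|` as soon as `k < n`.
-/

open Filter Finset Topology
open scoped Pointwise symmDiff

theorem mul_card_filter_lt_fiber_le {α β : Type*} [DecidableEq β] (A : Finset α) (q : α → β)
    {ν : β → ℝ} {s C : ℝ} (hν : ∀ T : Finset β, ∑ b ∈ T, ν b ≤ C) :
    s * #{a ∈ A | s * #{x ∈ A | q x = q a} < ν (q a)} ≤ C := by
  set B := {a ∈ A | s * #{x ∈ A | q x = q a} < ν (q a)}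
  have hfiber : ∀ b ∈ B.image q, {x ∈ B | q x = b} = {x ∈ A | q x = b} := by
    intro b hb
    obtain ⟨a, ha, rfl⟩ := mem_image.1 hb
    ext x
    simp only [B, mem_filter, and_congr_left_iff, and_iff_left_iff_imp]
    intro hxa _
    rw [hxa]
    exact (mem_filter.1 ha).2
  calc s * #B = ∑ b ∈ B.image q, s * #{x ∈ A | q x = b} := by
        rw [card_eq_sum_card_image q B, Nat.cast_sum, mul_sum]
        exact sum_congr rfl fun b hb => by rw [hfiber b hb]
    _ ≤ ∑ b ∈ B.image q, ν b := by
        refine sum_le_sum fun b hb => ?_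
        obtain ⟨a, ha, rfl⟩ := mem_image.1 hb
        exact (mem_filter.1 ha).2.le
    _ ≤ C := hν _

theorem card_le_two_mul_card_of_card_symmDiff_le {α : Type*} [DecidableEq α] {A A' : Finset α}
    {t : ℝ} (ht : t ≤ 1 / 2) (h : #(A' ∆ A) ≤ t * #A) : (#A : ℝ) ≤ 2 * #A' := by
  have : #A ≤ #A' + #(A' ∆ A) := by
    calc #A ≤ #(A \ A') + #A' := card_le_card_sdiff_add_card
      _ ≤ #(A' ∆ A) + #A' := by
          gcongr
          exact fun x hx => mem_symmDiff.2 (Or.inr (mem_sdiff.1 hx))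
      _ = _ := add_comm _ _
  have : (#A : ℝ) ≤ #A' + #(A' ∆ A) := by exact_mod_cast this
  nlinarith [(Nat.cast_nonneg (#A) : (0:ℝ) ≤ _)]

theorem Finset.Nonempty.of_card_symmDiff_le {α : Type*} [DecidableEq α] {A A' : Finset α}
    {t : ℝ} (hA : A.Nonempty) (ht : t ≤ 1 / 2) (h : #(A' ∆ A) ≤ t * #A) : A'.Nonempty := by
  have hA' : (0 : ℝ) < #A := by exact_mod_cast hA.card_pos
  have : (0 : ℝ) < #A' := by linarith [card_le_two_mul_card_of_card_symmDiff_le ht h]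
  exact Finset.card_pos.1 (by exact_mod_cast this)

theorem tendsto_card_symmDiff_div_card_of_le {α : Type*} [DecidableEq α] {F F' : ℕ → Finset α}
    {t : ℕ → ℝ} (hne : ∀ n, (F n).Nonempty)
    (ht : Tendsto t atTop (𝓝 0)) (hhalf : ∀ n, t n ≤ 1 / 2)
    (hle : ∀ n, #(F' n ∆ F n) ≤ t n * #(F n)) :
    Tendsto (fun n => (#(F' n ∆ F n) : ℝ) / #(F' n)) atTop (𝓝 0) := by
  refine squeeze_zero (fun n => by positivity) (fun n => ?_) (by simpa using ht.const_mul 2)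
  have hF : (0 : ℝ) < #(F n) := by exact_mod_cast (hne n).card_pos
  have ht0 : 0 ≤ t n := nonneg_of_mul_nonneg_left ((Nat.cast_nonneg _).trans (hle n)) hF
  have hF' : (0 : ℝ) < #(F' n) := by
    exact_mod_cast ((hne n).of_card_symmDiff_le (hhalf n) (hle n)).card_pos
  rw [div_le_iff₀ hF']
  nlinarith [card_le_two_mul_card_of_card_symmDiff_le (hhalf n) (hle n), hle n]

section Folner

variable {G : Type*} [Group G] [DecidableEq G]

def IsFolnerSeq (F : ℕ → Finset G) : Prop :=
  ∀ a : G, Tendsto (fun n => (#((a • F n) ∆ F n) : ℝ) / #(F n)) atTop (𝓝 0)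

theorem card_smul_symmDiff_le (a : G) (A : Finset G) : #((a • A) ∆ A) ≤ 2 * #A := by
  calc #((a • A) ∆ A) ≤ #((a • A) ∪ A) := card_le_card (symmDiff_le_sup (α := Finset G))
    _ ≤ #(a • A) + #A := card_union_le _ _
    _ = 2 * #A := by rw [card_smul_finset]; ring

theorem card_smul_symmDiff_le_add (a : G) (A A' : Finset G) :
    #((a • A') ∆ A') ≤ #((a • A) ∆ A) + 2 * #(A' ∆ A) := by
  have hsub : (a • A') ∆ A' ⊆ ((a • A') ∆ (a • A) ∪ (a • A) ∆ A) ∪ A ∆ A' :=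
    (symmDiff_triangle _ A _).trans (sup_le_sup_right (symmDiff_triangle _ (a • A) _) _)
  calc #((a • A') ∆ A') ≤ #((a • A') ∆ (a • A)) + #((a • A) ∆ A) + #(A ∆ A') :=
        (card_le_card hsub).trans <| (card_union_le _ _).trans <|
          Nat.add_le_add_right (card_union_le _ _) _
    _ = #((a • A) ∆ A) + 2 * #(A' ∆ A) := by
        rw [← smul_finset_symmDiff, card_smul_finset, symmDiff_comm A]; ring

variable {F F' : ℕ → Finset G} {t : ℕ → ℝ}

theorem IsFolnerSeq.of_card_symmDiff_le (hF : IsFolnerSeq F) (hne : ∀ n, (F n).Nonempty)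
    (ht : Tendsto t atTop (𝓝 0)) (hhalf : ∀ n, t n ≤ 1 / 2)
    (hle : ∀ n, #(F' n ∆ F n) ≤ t n * #(F n)) : IsFolnerSeq F' := by
  intro a
  have hlim := ((hF a).const_mul 2).add
    ((tendsto_card_symmDiff_div_card_of_le hne ht hhalf hle).const_mul 2)
  refine squeeze_zero (fun n => by positivity) (fun n => ?_) (by simpa using hlim)
  have hF : (0 : ℝ) < #(F n) := by exact_mod_cast (hne n).card_pos
  have h2 := card_le_two_mul_card_of_card_symmDiff_le (hhalf n) (hle n)
  have hF' : (0 : ℝ) < #(F' n) := by linarith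
  have hsd : (#((a • F' n) ∆ F' n) : ℝ) ≤ #((a • F n) ∆ F n) + 2 * #(F' n ∆ F n) := by
    exact_mod_cast card_smul_symmDiff_le_add a (F n) (F' n)
  have hφ : (#((a • F n) ∆ F n) : ℝ) / #(F' n) ≤ 2 * (#((a • F n) ∆ F n) / #(F n)) := by
    rw [← mul_div_assoc, div_le_div_iff₀ hF' hF]
    nlinarith [(Nat.cast_nonneg _ : (0 : ℝ) ≤ #((a • F n) ∆ F n))]
  calc (#((a • F' n) ∆ F' n) : ℝ) / #(F' n)
      ≤ (#((a • F n) ∆ F n) + 2 * #(F' n ∆ F n)) / #(F' n) := by gcongr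
    _ = #((a • F n) ∆ F n) / #(F' n) + 2 * (#(F' n ∆ F n) / #(F' n)) := by ring
    _ ≤ _ := by linarith

end Folner

section RightCoset

variable {G : Type*} [Group G] (H : Subgroup G)

def rightCosetMk (w : G) : Quotient (QuotientGroup.rightRel H) := Quotient.mk _ w

variable {H}

theorem rightCosetMk_mul_of_mem {h : G} (hh : h ∈ H) (w : G) :
    rightCosetMk H (h * w) = rightCosetMk H w :=
  Quotient.sound <| QuotientGroup.rightRel_apply.2 <| by simpa using H.inv_mem hh

theorem rightCosetMk_eq_inv_iff {w x : G} :
    rightCosetMk H w = rightCosetMk H x⁻¹ ↔ w * x ∈ H := by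
  rw [rightCosetMk, rightCosetMk, Quotient.eq, QuotientGroup.rightRel_apply, ← mul_inv_rev,
    inv_mem_iff]

variable [DecidablePred (· ∈ H)]

theorem filter_mul_mem_eq_filter_rightCosetMk (A : Finset G) (x : G) :
    {w ∈ A | w * x ∈ H} = {w ∈ A | rightCosetMk H w = rightCosetMk H x⁻¹} :=
  filter_congr fun _ _ => rightCosetMk_eq_inv_iff.symm

variable [DecidableEq G]

theorem filter_rightCosetMk_smul {h : G} (hh : h ∈ H) (A : Finset G) (b) :
    {w ∈ h • A | rightCosetMk H w = b} = h • {w ∈ A | rightCosetMk H w = b} := by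
  ext w
  simp only [mem_filter, mem_smul_finset, smul_eq_mul]
  constructor
  · rintro ⟨⟨v, hv, rfl⟩, hb⟩
    exact ⟨v, ⟨hv, by rwa [rightCosetMk_mul_of_mem hh] at hb⟩, rfl⟩
  · rintro ⟨v, ⟨hv, hb⟩, rfl⟩
    exact ⟨⟨v, hv, rfl⟩, by rwa [rightCosetMk_mul_of_mem hh]⟩

theorem filter_rightCosetMk_smul_symmDiff {h : G} (hh : h ∈ H) (A : Finset G) (b) :
    {w ∈ (h • A) ∆ A | rightCosetMk H w = b} =
      (h • {w ∈ A | rightCosetMk H w = b}) ∆ {w ∈ A | rightCosetMk H w = b} := by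
  rw [← filter_rightCosetMk_smul hh]
  ext w
  simp only [mem_filter, mem_symmDiff]
  tauto

end RightCoset

theorem card_smul_image_mul_right_symmDiff {G : Type*} [Group G] [DecidableEq G] (a x : G)
    (P : Finset G) : #((a • P.image (· * x)) ∆ P.image (· * x)) = #((a • P) ∆ P) := by
  have hsmul : a • P.image (· * x) = (a • P).image (· * x) := by
    simp only [smul_finset_def, image_image]
    exact image_congr fun w _ => by simp [mul_assoc]
  rw [hsmul, ← image_symmDiff _ _ (mul_left_injective x),
    card_image_of_injective _ (mul_left_injective x)]

section WeightedDefect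

variable {G : Type*} [Group G] [DecidableEq G]

-- The weights sum to `1 / 8`, so the weighted defect is at most `1 / 4`
-- and `goodPart` discards at most half of the set.
noncomputable def defectWeight (k : ℕ) : ℝ := (1 / 2) ^ k / 16

theorem defectWeight_pos (k : ℕ) : 0 < defectWeight k := by
  unfold defectWeight; positivity

theorem summable_defectWeight : Summable defectWeight :=
  summable_geometric_two.div_const 16

theorem tsum_defectWeight : ∑' k, defectWeight k = 1 / 8 := by
  simp only [defectWeight]
  rw [tsum_div_const, tsum_geometric_two]; norm_num

noncomputable def weightedDefect (e : ℕ → G) (A : Finset G) : ℝ :=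
  ∑' k, defectWeight k * (#((e k • A) ∆ A) / #A)

theorem defectWeight_mul_div_le (a : G) (A : Finset G) (k : ℕ) :
    defectWeight k * (#((a • A) ∆ A) / #A) ≤ 2 * defectWeight k := by
  rw [mul_comm 2]
  refine mul_le_mul_of_nonneg_left (div_le_of_le_mul₀ (by positivity) zero_le_two ?_)
    (defectWeight_pos k).le
  exact_mod_cast card_smul_symmDiff_le a A

theorem summable_weightedDefect (e : ℕ → G) (A : Finset G) :
    Summable fun k => defectWeight k * (#((e k • A) ∆ A) / #A) :=
  (summable_defectWeight.mul_left 2).of_nonneg_of_le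
    (fun k => by have := defectWeight_pos k; positivity) (fun k => defectWeight_mul_div_le _ A k)

theorem sqrt_weightedDefect_le_half (e : ℕ → G) (A : Finset G) :
    √(weightedDefect e A) ≤ 1 / 2 := by
  have : weightedDefect e A ≤ 1 / 4 :=
    calc weightedDefect e A ≤ ∑' k, 2 * defectWeight k := by
          unfold weightedDefect
          exact (summable_weightedDefect e A).tsum_le_tsum (fun k => defectWeight_mul_div_le _ A k)
            (summable_defectWeight.mul_left 2)
      _ = 1 / 4 := by rw [tsum_mul_left, tsum_defectWeight]; norm_num
  rw [Real.sqrt_le_left (by norm_num)]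
  linarith

theorem IsFolnerSeq.tendsto_weightedDefect {F : ℕ → Finset G} (hF : IsFolnerSeq F)
    (e : ℕ → G) : Tendsto (fun n => weightedDefect e (F n)) atTop (𝓝 0) := by
  have := tendsto_tsum_of_dominated_convergence (summable_defectWeight.mul_left 2)
    (fun k => by simpa using (hF (e k)).const_mul (defectWeight k))
    (Eventually.of_forall fun n k => by
      rw [Real.norm_of_nonneg (by have := defectWeight_pos k; positivity)]
      exact defectWeight_mul_div_le _ _ k)
  rwa [tsum_zero] at this

theorem weightedDefect_nonneg (e : ℕ → G) (A : Finset G) : 0 ≤ weightedDefect e A :=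
  tsum_nonneg fun k => by have := defectWeight_pos k; positivity

-- The summand `1 / (n + 1)` keeps the threshold positive when the weighted defect vanishes.
noncomputable def goodThreshold (e : ℕ → G) (A : Finset G) (n : ℕ) : ℝ :=
  √(weightedDefect e A) + 1 / (n + 1)

theorem sqrt_weightedDefect_le_goodThreshold (e : ℕ → G) (A : Finset G) (n : ℕ) :
    √(weightedDefect e A) ≤ goodThreshold e A n :=
  le_add_of_nonneg_right (by positivity)

theorem goodThreshold_pos (e : ℕ → G) (A : Finset G) (n : ℕ) : 0 < goodThreshold e A n := by
  unfold goodThreshold; positivity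

theorem IsFolnerSeq.tendsto_goodThreshold {F : ℕ → Finset G} (hF : IsFolnerSeq F)
    (e : ℕ → G) : Tendsto (fun n => goodThreshold e (F n) n) atTop (𝓝 0) := by
  simpa [goodThreshold] using
    (hF.tendsto_weightedDefect e).sqrt.add tendsto_one_div_add_atTop_nhds_zero_nat

end WeightedDefect

section GoodPart

variable {G : Type*} [Group G] [DecidableEq G] (H : Subgroup G) [DecidablePred (· ∈ H)]

noncomputable def cosetDefect (e : ℕ → G) (A : Finset G) (n : ℕ)
    (b : Quotient (QuotientGroup.rightRel H)) : ℝ :=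
  ∑ k ∈ range n, defectWeight k * #{v ∈ (e k • A) ∆ A | rightCosetMk H v = b}

noncomputable def goodPart (e : ℕ → G) (A : Finset G) (n : ℕ) : Finset G :=
  {w ∈ A | cosetDefect H e A n (rightCosetMk H w) ≤
    goodThreshold e A n * #{v ∈ A | rightCosetMk H v = rightCosetMk H w}}

variable {H}

theorem sum_cosetDefect_le (e : ℕ → G) {A : Finset G} (hA : A.Nonempty) (n : ℕ)
    (T : Finset (Quotient (QuotientGroup.rightRel H))) :
    ∑ b ∈ T, cosetDefect H e A n b ≤ weightedDefect e A * #A := by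
  have hA' : (0 : ℝ) < #A := by exact_mod_cast hA.card_pos
  calc ∑ b ∈ T, cosetDefect H e A n b
      = ∑ k ∈ range n, defectWeight k *
          ∑ b ∈ T, (#{v ∈ (e k • A) ∆ A | rightCosetMk H v = b} : ℝ) := by
        simp only [cosetDefect, mul_sum]; exact sum_comm
    _ ≤ ∑ k ∈ range n, defectWeight k * #((e k • A) ∆ A) := by
        gcongr with k
        · exact (defectWeight_pos k).le
        · exact_mod_cast (sum_card_fiberwise_eq_card_filter _ _ _).trans_le (card_filter_le _ _)
    _ = (∑ k ∈ range n, defectWeight k * (#((e k • A) ∆ A) / #A)) * #A := by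
        rw [sum_mul]
        exact sum_congr rfl fun k _ => by field_simp
    _ ≤ weightedDefect e A * #A := by
        gcongr
        exact (summable_weightedDefect e A).sum_le_tsum _
          fun k _ => by have := defectWeight_pos k; positivity

theorem card_goodPart_symmDiff_le (e : ℕ → G) {A : Finset G} (hA : A.Nonempty) (n : ℕ) :
    #(goodPart H e A n ∆ A) ≤ √(weightedDefect e A) * #A := by
  set s := goodThreshold e A n
  set Φ := weightedDefect e A
  have hbad : goodPart H e A n ∆ A =
      {w ∈ A | s * #{v ∈ A | rightCosetMk H v = rightCosetMk H w} <
        cosetDefect H e A n (rightCosetMk H w)} := by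
    rw [symmDiff_of_le (filter_subset _ _), goodPart, ← filter_not]
    simp only [not_le, s]
  rw [hbad]
  refine le_of_mul_le_mul_left ?_ (goodThreshold_pos e A n)
  calc s * _ ≤ Φ * #A := mul_card_filter_lt_fiber_le A _ (sum_cosetDefect_le e hA n)
    _ = √Φ * (√Φ * #A) := by rw [← mul_assoc, Real.mul_self_sqrt (weightedDefect_nonneg e A)]
    _ ≤ s * (√Φ * #A) := by gcongr; exact sqrt_weightedDefect_le_goodThreshold e A n

theorem defectWeight_mul_card_smul_symmDiff_fiber_le {e : ℕ → G} {k n : ℕ} (he : e k ∈ H)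
    (hk : k < n) (A : Finset G) (b : Quotient (QuotientGroup.rightRel H)) :
    defectWeight k * #((e k • {w ∈ goodPart H e A n | rightCosetMk H w = b}) ∆
        {w ∈ goodPart H e A n | rightCosetMk H w = b}) ≤
      goodThreshold e A n * #{w ∈ goodPart H e A n | rightCosetMk H w = b} := by
  by_cases hb : cosetDefect H e A n b ≤ goodThreshold e A n * #{v ∈ A | rightCosetMk H v = b}
  · have hfiber :
        {w ∈ goodPart H e A n | rightCosetMk H w = b} = {w ∈ A | rightCosetMk H w = b} := by
      ext w
      simp only [goodPart, mem_filter, and_congr_left_iff, and_iff_left_iff_imp]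
      rintro rfl _
      exact hb
    rw [hfiber, ← filter_rightCosetMk_smul_symmDiff he]
    refine le_trans ?_ hb
    exact single_le_sum
      (f := fun j => defectWeight j * (#{v ∈ (e j • A) ∆ A | rightCosetMk H v = b} : ℝ))
      (fun j _ => by have := defectWeight_pos j; positivity) (mem_range.2 hk)
  · have hfiber : {w ∈ goodPart H e A n | rightCosetMk H w = b} = ∅ := by
      refine filter_eq_empty_iff.2 fun w hw hwb => hb ?_
      rw [← hwb]
      exact (mem_filter.1 hw).2
    simp [hfiber]

end GoodPart

theorem IsFolnerSeq.eventually_card_smul_symmDiff_fiber_goodPart_le {G : Type*} [Group G]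
    [DecidableEq G] {H : Subgroup G} [DecidablePred (· ∈ H)] {F : ℕ → Finset G}
    (hF : IsFolnerSeq F) {e : ℕ → G} {k : ℕ} (he : e k ∈ H) {ε : ℝ} (hε : 0 < ε) :
    ∀ᶠ n in atTop, ∀ b, (#((e k • {w ∈ goodPart H e (F n) n | rightCosetMk H w = b}) ∆
        {w ∈ goodPart H e (F n) n | rightCosetMk H w = b}) : ℝ) ≤
      ε * #{w ∈ goodPart H e (F n) n | rightCosetMk H w = b} := by
  filter_upwards [eventually_gt_atTop k, (hF.tendsto_goodThreshold e).eventually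
    (eventually_le_nhds (mul_pos hε (defectWeight_pos k)))] with n hk hs b
  refine le_of_mul_le_mul_left ?_ (defectWeight_pos k)
  calc defectWeight k * _ ≤ goodThreshold e (F n) n * _ :=
        defectWeight_mul_card_smul_symmDiff_fiber_le he hk _ b
    _ ≤ ε * defectWeight k * _ := by gcongr
    _ = defectWeight k * (ε * _) := by ring

theorem folner_coset_decomposition_general {G : Type*} [Group G] [Countable G] [DecidableEq G]
    (H : Subgroup G) [DecidablePred (· ∈ H)]
    {ι : Type*} (g : ι → G)
    (Wt : ℕ → Finset G) (hWtne : ∀ n, (Wt n).Nonempty)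
    (hWtFolner : ∀ a : G,
      Tendsto (fun n => ((symmDiff (a • Wt n) (Wt n)).card : ℝ) / (Wt n).card) atTop (nhds 0)) :
    ∃ W : ℕ → Finset G, (∀ n, (W n).Nonempty) ∧
      (∀ a : G,
        Tendsto (fun n => ((symmDiff (a • W n) (W n)).card : ℝ) / (W n).card) atTop (nhds 0)) ∧
      Tendsto (fun n => ((symmDiff (W n) (Wt n)).card : ℝ) / (W n).card) atTop (nhds 0) ∧
      ∀ h ∈ H, ∀ ε : ℝ, 0 < ε → ∃ N : ℕ, ∀ n ≥ N, ∀ i : ι,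
        ((symmDiff (h • (((W n).filter fun w => w * g i ∈ H).image fun w => w * g i))
            (((W n).filter fun w => w * g i ∈ H).image fun w => w * g i)).card : ℝ)
          ≤ ε * (((W n).filter fun w => w * g i ∈ H).image fun w => w * g i).card := by
  have hF : IsFolnerSeq Wt := hWtFolner
  obtain ⟨e, he⟩ := exists_surjective_nat H
  let u : ℕ → G := fun k => e k
  have hle n := card_goodPart_symmDiff_le (H := H) u (hWtne n) n
  have hsqrt := (hF.tendsto_weightedDefect u).sqrt
  rw [Real.sqrt_zero] at hsqrt
  have hhalf n := sqrt_weightedDefect_le_half u (Wt n)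
  refine ⟨fun n => goodPart H u (Wt n) n,
    fun n => (hWtne n).of_card_symmDiff_le (hhalf n) (hle n),
    hF.of_card_symmDiff_le hWtne hsqrt hhalf hle,
    tendsto_card_symmDiff_div_card_of_le hWtne hsqrt hhalf hle, ?_⟩
  intro h hh ε hε
  obtain ⟨k, hk⟩ := he ⟨h, hh⟩
  obtain rfl : (e k : G) = h := congrArg Subtype.val hk
  obtain ⟨N, hN⟩ :=
    eventually_atTop.1 (hF.eventually_card_smul_symmDiff_fiber_goodPart_le (e := u) (e k).2 hε)
  refine ⟨N, fun n hn i => ?_⟩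
  rw [card_smul_image_mul_right_symmDiff, card_image_of_injective _ (mul_left_injective _),
    filter_mul_mem_eq_filter_rightCosetMk]
  exact hN n hn _

/-- Lemma 3: given a subgroup `H ≤ G` of a countable amenable group with a fixed system of
left-coset representatives `g i` and a Følner sequence `{W̃ₙ}`, there is a Følner sequence
`{Wₙ}` with `|Wₙ ∆ W̃ₙ| = o(|Wₙ|)` such that the pieces `Sₙⁱ = (Wₙ ∩ H gᵢ⁻¹)·gᵢ ⊆ H` of the
coset decomposition `Wₙ = ⋃ᵢ Sₙⁱ gᵢ⁻¹` satisfy: for every `h ∈ H` and `ε > 0`,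
`|h Sₙⁱ ∆ Sₙⁱ| ≤ ε |Sₙⁱ|` for all sufficiently large `n`, uniformly in `i`. -/
theorem folner_coset_decomposition {G : Type*} [Group G] [Countable G] [DecidableEq G]
    (H : Subgroup G) [DecidablePred (· ∈ H)]
    {ι : Type*} (g : ι → G) (hreps : ∀ x : G, ∃! i : ι, (g i)⁻¹ * x ∈ H)
    (Wt : ℕ → Finset G) (hWtne : ∀ n, (Wt n).Nonempty)
    (hWtFolner : ∀ a : G,
      Tendsto (fun n => ((symmDiff (a • Wt n) (Wt n)).card : ℝ) / (Wt n).card) atTop (nhds 0)) :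
    ∃ W : ℕ → Finset G, (∀ n, (W n).Nonempty) ∧
      (∀ a : G,
        Tendsto (fun n => ((symmDiff (a • W n) (W n)).card : ℝ) / (W n).card) atTop (nhds 0)) ∧
      Tendsto (fun n => ((symmDiff (W n) (Wt n)).card : ℝ) / (W n).card) atTop (nhds 0) ∧
      ∀ h ∈ H, ∀ ε : ℝ, 0 < ε → ∃ N : ℕ, ∀ n ≥ N, ∀ i : ι,
        ((symmDiff (h • (((W n).filter fun w => w * g i ∈ H).image fun w => w * g i))
            (((W n).filter fun w => w * g i ∈ H).image fun w => w * g i)).card : ℝ)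
          ≤ ε * (((W n).filter fun w => w * g i ∈ H).image fun w => w * g i).card :=
  folner_coset_decomposition_general H g Wt hWtne hWtFolner
end

section
/- Let h ∈ H act on finite subsets of H by left multiplication, and let W ⊂ G be finite with decomposition W = ⋃_i S^i g_i^{-1} into right H-cosets. Then hW decomposes as ⋃_i (hS^i) g_i^{-1}, and consequently |hW △ W| = Σ_i |hS^i △ S^i|. -/
open Pointwise

/-- Left multiplication by `h ∈ H` respects the decomposition `W = ⋃ᵢ Sⁱ gᵢ⁻¹` of a finite
set `W ⊆ G` into right `H`-cosets: `hW = ⋃ᵢ (hSⁱ) gᵢ⁻¹`, and hence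
`|hW ∆ W| = Σᵢ |hSⁱ ∆ Sⁱ|`. Here `Sⁱ = {w gᵢ : w ∈ W, w gᵢ ∈ H} ⊆ H`. -/
theorem smul_coset_decomposition {G : Type*} [Group G] [DecidableEq G]
    (H : Subgroup G) [DecidablePred (· ∈ H)]
    {ι : Type*} (g : ι → G) (hreps : ∀ x : G, ∃! i : ι, (g i)⁻¹ * x ∈ H)
    (W : Finset G) (h : G) (hh : h ∈ H)
    (S : ι → Finset G) (hS : ∀ i, S i = (W.filter fun w => w * g i ∈ H).image fun w => w * g i) :
    (∀ i, (((h • W).filter fun w => w * g i ∈ H).image fun w => w * g i) = h • S i) ∧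
      (symmDiff (h • W) W).card = ∑ᶠ i : ι, (symmDiff (h • S i) (S i)).card := by
  classical
  have key : ∀ (T : Finset G) (i : ι),
      (((h • T).filter fun w => w * g i ∈ H).image fun w => w * g i)
        = h • ((T.filter fun w => w * g i ∈ H).image fun w => w * g i) := by
    intro T i
    ext x
    simp only [Finset.mem_image, Finset.mem_filter, Finset.mem_smul_finset, smul_eq_mul]
    constructor
    · rintro ⟨w, ⟨⟨w', hw', rfl⟩, hmem⟩, rfl⟩
      have hm : w' * g i ∈ H := by
        have := H.mul_mem (H.inv_mem hh) hmem
        simpa [mul_assoc] using this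
      exact ⟨w' * g i, ⟨w', ⟨hw', hm⟩, rfl⟩, by group⟩
    · rintro ⟨y, ⟨w', ⟨hw', hm⟩, rfl⟩, rfl⟩
      have hm2 : h * w' * g i ∈ H := by
        have := H.mul_mem hh hm
        simpa [mul_assoc] using this
      exact ⟨h * w', ⟨⟨w', hw', rfl⟩, hm2⟩, by group⟩
  have part1 : ∀ i, (((h • W).filter fun w => w * g i ∈ H).image fun w => w * g i) = h • S i := by
    intro i; rw [hS i]; exact key W i
  refine ⟨part1, ?_⟩
  set V := symmDiff (h • W) W with hV
  -- the index of an element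
  have hidx : ∀ w : G, ∃! i : ι, w * g i ∈ H := by
    intro w
    obtain ⟨i, hi, hiu⟩ := hreps w⁻¹
    refine ⟨i, ?_, ?_⟩
    · have : ((w * g i)⁻¹ : G) ∈ H := by simpa [mul_inv_rev] using hi
      exact (H.inv_mem_iff).mp this
    · intro j hj
      exact hiu j (by simpa [mul_inv_rev] using H.inv_mem hj)
  let idx : G → ι := fun w => (hidx w).choose
  have hidx1 : ∀ w : G, w * g (idx w) ∈ H := fun w => (hidx w).choose_spec.1
  have hidx2 : ∀ w i, w * g i ∈ H → idx w = i := fun w i hi =>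
    ((hidx w).choose_spec.2 i hi).symm
  have hDeq : ∀ i, ((V.filter fun w => w * g i ∈ H).image fun w => w * g i)
      = symmDiff (h • S i) (S i) := by
    intro i
    have hinj : Function.Injective fun w : G => w * g i := fun a b hab => by
      simpa using mul_right_cancel hab
    have hfilt : V.filter (fun w => w * g i ∈ H)
        = symmDiff ((h • W).filter fun w => w * g i ∈ H) (W.filter fun w => w * g i ∈ H) := by
      ext x
      simp only [Finset.mem_filter, Finset.mem_symmDiff, hV]
      tauto
    rw [hfilt, Finset.image_symmDiff _ _ hinj, part1 i, hS i]
  set T := V.image idx with hT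
  have hcard : V.card = ∑ b ∈ T, (V.filter fun w => idx w = b).card :=
    Finset.card_eq_sum_card_fiberwise fun x hx => Finset.mem_image_of_mem _ hx
  have hfib : ∀ b, (V.filter fun w => idx w = b) = V.filter fun w => w * g b ∈ H := by
    intro b
    apply Finset.filter_congr
    intro x _
    constructor
    · rintro rfl; simpa using hidx1 x
    · intro hxb; simpa using hidx2 x b hxb
  have hsum : V.card = ∑ b ∈ T, (symmDiff (h • S b) (S b)).card := by
    rw [hcard]
    refine Finset.sum_congr rfl fun b _ => ?_
    rw [hfib b, ← hDeq b]
    exact (Finset.card_image_of_injective _ (fun a c hac => by simpa using mul_right_cancel hac)).symm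
  rw [hsum]
  refine (finsum_eq_finset_sum_of_support_subset _ ?_).symm
  intro i hi
  have : (symmDiff (h • S i) (S i)).Nonempty := Finset.card_pos.mp (Nat.pos_of_ne_zero hi)
  obtain ⟨x, hx⟩ := this
  rw [← hDeq i] at hx
  obtain ⟨w, hw, rfl⟩ := Finset.mem_image.mp hx
  have hw' := Finset.mem_filter.mp hw
  rw [hT]
  exact Finset.mem_image.mpr ⟨w, hw'.1, hidx2 w i hw'.2⟩
end

section
/- Let s₁, ..., s_k > 0 be weights, b₁, ..., b_k ≥ 2 integers, φ > 1, with log₂ b_r ≤ s_r ≤ φ log₂ b_r for each r. Let u₁, ..., u_k be independent, u_r uniform on {1,...,b_r}. Then for ε ∈ (0,1): P( Σ_r s_r 𝟙{u_r = 1} ≥ (1−ε) Σ_r s_r ) ≤ 2^k · (∏_r b_r)^{−(1−ε)/φ}. -/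
/-!
If the weighted indicator sum is at least `(1 - ε) ∑ s`, then the set `T` of indices with
`u r = 1` carries a `(1 - ε)` share of the weights; since `log₂ b r ≤ s r ≤ φ log₂ b r`, it then
carries a `(1 - ε) / φ` share of `∑ log₂ b r`, i.e. `∏_{r ∈ T} b r ≥ (∏ b r) ^ ((1 - ε) / φ)`.
By independence the event `{u r = 1 for all r ∈ T}` has probability `∏_{r ∈ T} (b r)⁻¹`, and a
union bound over the at most `2 ^ k` such sets `T` gives the claim.
-/

open MeasureTheory ProbabilityTheory Finset
open scoped ENNReal

section HeavySubset

variable {ι : Type*} [Fintype ι]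

lemma div_mul_sum_le_sum_of_heavy {T : Finset ι} {L s : ι → ℝ} {φ c : ℝ} (hφ : 0 < φ)
    (hc : 0 ≤ c) (hL : ∀ r, L r ≤ s r) (hs : ∀ r, s r ≤ φ * L r)
    (hT : c * ∑ r, s r ≤ ∑ r ∈ T, s r) :
    c / φ * ∑ r, L r ≤ ∑ r ∈ T, L r := by
  calc c / φ * ∑ r, L r ≤ c / φ * ∑ r, s r := by
        gcongr with r
        exact hL r
    _ = (c * ∑ r, s r) / φ := by ring
    _ ≤ (∑ r ∈ T, s r) / φ := by gcongr
    _ ≤ ∑ r ∈ T, L r := by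
        rw [div_le_iff₀ hφ, sum_mul]
        exact sum_le_sum fun r _ => by linarith [hs r]

lemma rpow_le_prod_of_heavy {T : Finset ι} {a : ℝ} {b s : ι → ℝ} {φ c : ℝ} (ha : 1 < a)
    (hb : ∀ r, 0 < b r) (hφ : 0 < φ) (hc : 0 ≤ c) (hL : ∀ r, Real.logb a (b r) ≤ s r)
    (hs : ∀ r, s r ≤ φ * Real.logb a (b r)) (hT : c * ∑ r, s r ≤ ∑ r ∈ T, s r) :
    (∏ r, b r) ^ (c / φ) ≤ ∏ r ∈ T, b r := by
  have hprod : 0 < ∏ r, b r := prod_pos fun r _ => hb r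
  rw [← Real.logb_le_logb ha (Real.rpow_pos_of_pos hprod _) (prod_pos fun r _ => hb r),
    Real.logb_rpow_eq_mul_logb_of_pos hprod, Real.logb_prod _ _ fun r _ => (hb r).ne',
    Real.logb_prod _ _ fun r _ => (hb r).ne']
  exact div_mul_sum_le_sum_of_heavy hφ hc hL hs hT

end HeavySubset

lemma ProbabilityTheory.iIndepFun.measureReal_biInter_eq_inv_prod {Ω ι β : Type*}
    [MeasurableSpace Ω] [MeasurableSpace β] [MeasurableSingletonClass β] {μ : Measure Ω}
    {u : ι → Ω → β} (hindep : iIndepFun u μ) {b : ι → ℕ} (x : β)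
    (hunif : ∀ r, μ {ω | u r ω = x} = ((b r : ℝ≥0∞))⁻¹) (T : Finset ι) :
    μ.real (⋂ r ∈ T, {ω | u r ω = x}) = (∏ r ∈ T, (b r : ℝ))⁻¹ := by
  rw [measureReal_def, hindep.meas_biInter (s := fun r => {ω | u r ω = x})
      fun r _ => ⟨{x}, MeasurableSet.singleton x, rfl⟩,
    ENNReal.toReal_prod, ← prod_inv_distrib]
  exact prod_congr rfl fun r _ => by rw [hunif, ENNReal.toReal_inv, ENNReal.toReal_natCast]

theorem chebyshev_indicator_bound_general {Ω : Type*} [MeasurableSpace Ω]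
    (μ : Measure Ω) [IsProbabilityMeasure μ]
    (k : ℕ) (b : Fin k → ℕ) (hb : ∀ r, 2 ≤ b r)
    (s : Fin k → ℝ) (φ : ℝ) (hφ : 1 < φ)
    (hlog : ∀ r, Real.logb 2 (b r) ≤ s r ∧ s r ≤ φ * Real.logb 2 (b r))
    (u : Fin k → Ω → ℕ)
    (hindep : iIndepFun u μ)
    (hunif : ∀ r, ∀ j ∈ Finset.Icc 1 (b r), μ {ω | u r ω = j} = ((b r : ℝ≥0∞))⁻¹)
    (ε : ℝ) (hε1 : ε < 1) :
    (μ {ω | (1 - ε) * ∑ r, s r ≤ ∑ r, s r * (if u r ω = 1 then (1 : ℝ) else 0)}).toReal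
      ≤ 2 ^ k * (∏ r, (b r : ℝ)) ^ (-(1 - ε) / φ) := by
  have hb0 : ∀ r, (0 : ℝ) < b r := fun r => by have := hb r; positivity
  have hprod : 0 < ∏ r, (b r : ℝ) := prod_pos fun r _ => hb0 r
  set 𝒯 := univ.filter fun T : Finset (Fin k) => (1 - ε) * ∑ r, s r ≤ ∑ r ∈ T, s r
  set A : Finset (Fin k) → Set Ω := fun T => ⋂ r ∈ T, {ω | u r ω = 1}
  have hsub : {ω | (1 - ε) * ∑ r, s r ≤ ∑ r, s r * (if u r ω = 1 then (1 : ℝ) else 0)}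
      ⊆ ⋃ T ∈ 𝒯, A T := fun ω hω => by
    simp only [mul_ite, mul_one, mul_zero, ← sum_filter, Set.mem_ofPred_eq] at hω
    simp only [A, Set.mem_iUnion, Set.mem_iInter]
    exact ⟨_, by simpa [𝒯] using hω, fun r hr => (mem_filter.1 hr).2⟩
  have hA : ∀ T ∈ 𝒯, μ.real (A T) ≤ (∏ r, (b r : ℝ)) ^ (-(1 - ε) / φ) := by
    intro T hT
    rw [hindep.measureReal_biInter_eq_inv_prod 1
        fun r => hunif r 1 (mem_Icc.2 ⟨le_rfl, by linarith [hb r]⟩),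
      neg_div, Real.rpow_neg hprod.le]
    exact inv_anti₀ (Real.rpow_pos_of_pos hprod _)
      (rpow_le_prod_of_heavy one_lt_two hb0 (by linarith) (by linarith) (fun r => (hlog r).1)
        (fun r => (hlog r).2) (mem_filter.1 hT).2)
  rw [← measureReal_def]
  calc _ ≤ μ.real (⋃ T ∈ 𝒯, A T) := measureReal_mono hsub (measure_ne_top _ _)
    _ ≤ ∑ T ∈ 𝒯, μ.real (A T) := measureReal_biUnion_finset_le _ _
    _ ≤ #𝒯 • (∏ r, (b r : ℝ)) ^ (-(1 - ε) / φ) := sum_le_card_nsmul _ _ _ hA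
    _ ≤ 2 ^ k * (∏ r, (b r : ℝ)) ^ (-(1 - ε) / φ) := by
        rw [nsmul_eq_mul]
        gcongr
        exact_mod_cast (card_le_univ 𝒯).trans_eq (by simp)

/-- Exponential Chebyshev bound: with weights `log₂ b r ≤ s r ≤ φ log₂ b r`, `b r ≥ 2`,
`φ > 1`, and independent `u r` uniform on `{1, …, b r}`, for `ε ∈ (0,1)`:
`P(Σ s_r 𝟙{u_r = 1} ≥ (1−ε) Σ s_r) ≤ 2^k (∏ b_r)^{−(1−ε)/φ}`. -/
theorem chebyshev_indicator_bound {Ω : Type*} [MeasurableSpace Ω]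
    (μ : Measure Ω) [IsProbabilityMeasure μ]
    (k : ℕ) (b : Fin k → ℕ) (hb : ∀ r, 2 ≤ b r)
    (s : Fin k → ℝ) (hs : ∀ r, 0 < s r) (φ : ℝ) (hφ : 1 < φ)
    (hlog : ∀ r, Real.logb 2 (b r) ≤ s r ∧ s r ≤ φ * Real.logb 2 (b r))
    (u : Fin k → Ω → ℕ) (hmeas : ∀ r, Measurable (u r))
    (hindep : iIndepFun u μ)
    (hrange : ∀ r ω, u r ω ∈ Finset.Icc 1 (b r))
    (hunif : ∀ r, ∀ j ∈ Finset.Icc 1 (b r), μ {ω | u r ω = j} = ((b r : ℝ≥0∞))⁻¹)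
    (ε : ℝ) (hε0 : 0 < ε) (hε1 : ε < 1) :
    (μ {ω | (1 - ε) * ∑ r, s r ≤ ∑ r, s r * (if u r ω = 1 then (1 : ℝ) else 0)}).toReal
      ≤ 2 ^ k * (∏ r, (b r : ℝ)) ^ (-(1 - ε) / φ) :=
  chebyshev_indicator_bound_general μ k b hb s φ hφ hlog u hindep hunif ε hε1
end
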